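/- arXiv:1801.00107 — 2 statements merged into one kernel-verified Lean document; each statement's English description precedes it below -/
import Mathlib

section
/- Let A and B be positive bounded operators on a complex Hilbert space H with A ≤ B. Then A is an extreme point of the operator interval [0,B] (as a convex subset of the real vector space of bounded operators on H) if and only if A and B − A are singular. -/
/-!
As `[0, B]` is convex, `A` fails to be extreme exactly when `A ± D ∈ [0, B]` for some `D ≠ 0`,
i.e. when some `D ≠ 0` satisfies `-A ≤ D ≤ A` and `-(B - A) ≤ D ≤ B - A`. A positive operator
below both `A` and `B - A` is such a `D`. Conversely, in any C⋆-algebra `-a ≤ d ≤ a` forces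
`d ^ 2 ≤ 2‖a‖ a`: add `e ^ 2 ≤ ‖e‖ e` for `e = a ± d ≥ 0` and use the parallelogram identity
`(a + d) ^ 2 + (a - d) ^ 2 = 2 (a ^ 2 + d ^ 2)`. So a small multiple of `D ^ 2` is a positive
operator below both `A` and `B - A`; singularity makes it vanish, and `D = 0` by the C⋆-identity.
-/

open scoped ComplexOrder

/-- `A` is a positive operator: `⟪A x, x⟫ ≥ 0` for all `x`. -/
def IsPosOp {H : Type*} [NormedAddCommGroup H] [InnerProductSpace ℂ H]
    (A : H →L[ℂ] H) : Prop :=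
  ∀ x : H, 0 ≤ (inner ℂ (A x) x : ℂ)

/-- The Loewner order: `A ≤ B` iff `B - A` is positive. -/
def OpLe {H : Type*} [NormedAddCommGroup H] [InnerProductSpace ℂ H]
    (A B : H →L[ℂ] H) : Prop :=
  IsPosOp (B - A)

/-- The quadratic form of an operator: `A[x] = re ⟪A x, x⟫`. -/
noncomputable def QF {H : Type*} [NormedAddCommGroup H] [InnerProductSpace ℂ H]
    (A : H →L[ℂ] H) (x : H) : ℝ :=
  (inner ℂ (A x) x : ℂ).re

/-- `A` and `B` are singular: the only positive operator below both is `0`. -/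
def SingOp {H : Type*} [NormedAddCommGroup H] [InnerProductSpace ℂ H]
    (A B : H →L[ℂ] H) : Prop :=
  ∀ C : H →L[ℂ] H, IsPosOp C → OpLe C A → OpLe C B → C = 0

/-- `B` is `A`-absolutely continuous: `B` is the strong limit of a monotone increasing
sequence of positive operators, each dominated by a nonnegative multiple of `A`. -/
def AbsCont {H : Type*} [NormedAddCommGroup H] [InnerProductSpace ℂ H]
    (B A : H →L[ℂ] H) : Prop :=
  ∃ Bn : ℕ → H →L[ℂ] H,
    (∀ n, IsPosOp (Bn n)) ∧
    (∀ m n, m ≤ n → OpLe (Bn m) (Bn n)) ∧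
    (∀ n, ∃ c : ℝ, 0 ≤ c ∧ OpLe (Bn n) (c • A)) ∧
    (∀ x : H, Filter.Tendsto (fun n => Bn n x) Filter.atTop (nhds (B x)))

/-- `S = [A]B`: the quadratic form of `S` is `sup_n inf_y (B[x-y] + n·A[y])`. -/
def IsShort {H : Type*} [NormedAddCommGroup H] [InnerProductSpace ℂ H]
    (A B S : H →L[ℂ] H) : Prop :=
  ∀ x : H, QF S x = ⨆ n : ℕ, ⨅ y : H, (QF B (x - y) + (n : ℝ) * QF A y)

theorem Convex.mem_extremePoints_iff_forall_add_sub {𝕜 E : Type*} [Field 𝕜] [LinearOrder 𝕜]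
    [IsStrictOrderedRing 𝕜] [AddCommGroup E] [Module 𝕜 E] {K : Set E} (hK : Convex 𝕜 K)
    {x : E} (hx : x ∈ K) :
    x ∈ K.extremePoints 𝕜 ↔ ∀ d, x + d ∈ K → x - d ∈ K → d = 0 := by
  refine ⟨fun hext d hplus hminus => ?_, fun h => ⟨hx, ?_⟩⟩
  · have hmid : x ∈ openSegment 𝕜 (x + d) (x - d) :=
      ⟨1 / 2, 1 / 2, by norm_num, by norm_num, by norm_num, by module⟩
    simpa using hext.2 hplus hminus hmid
  · rintro x₁ hx₁ x₂ hx₂ ⟨s, t, hs, ht, hst, rfl⟩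
    have hbalance : s • (x₁ - (s • x₁ + t • x₂)) = -(t • (x₂ - (s • x₁ + t • x₂))) := by
      obtain rfl : t = 1 - s := by linarith
      module
    have hd := h (s • (x₁ - (s • x₁ + t • x₂))) (hK.add_smul_sub_mem hx hx₁ ⟨hs.le, by linarith⟩)
      (by rw [hbalance, sub_neg_eq_add]; exact hK.add_smul_sub_mem hx hx₂ ⟨ht.le, by linarith⟩)
    rw [smul_eq_zero, sub_eq_zero] at hd
    exact hd.resolve_left hs.ne'

lemma nonneg_of_neg_le_of_le {M : Type*} [AddCommGroup M] [PartialOrder M] [IsOrderedAddMonoid M]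
    [Module ℝ M] [PosSMulMono ℝ M] {a d : M} (h₁ : -a ≤ d) (h₂ : d ≤ a) : 0 ≤ a := by
  have h : 0 ≤ (a + d) + (a - d) := add_nonneg (neg_le_iff_add_nonneg'.1 h₁) (sub_nonneg.2 h₂)
  have : a = (2⁻¹ : ℝ) • ((a + d) + (a - d)) := by module
  rw [this]
  exact smul_nonneg (by norm_num) h

namespace CStarAlgebra

variable {A : Type*} [CStarAlgebra A] [PartialOrder A] [StarOrderedRing A]

lemma sq_le_norm_smul_self {e : A} (he : 0 ≤ e) : e ^ 2 ≤ ‖e‖ • e := by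
  set s := CFC.sqrt e
  have hs : s * s = e := CFC.sqrt_mul_sqrt_self e he
  have h := star_left_conjugate_le_norm_smul (a := s) (b := e)
  rw [(CFC.sqrt_nonneg e).isSelfAdjoint.star_eq, hs] at h
  calc e ^ 2 = s * (s * s) * s := by rw [← hs]; noncomm_ring
    _ ≤ ‖e‖ • e := by rwa [hs]

lemma sq_le_two_norm_smul_of_neg_le_of_le {a d : A} (h₁ : -a ≤ d) (h₂ : d ≤ a) :
    d ^ 2 ≤ (2 * ‖a‖) • a := by
  have ha := nonneg_of_neg_le_of_le h₁ h₂
  have hsq : ∀ e, 0 ≤ e → e ≤ (2 : ℝ) • a → e ^ 2 ≤ (2 * ‖a‖) • e := fun e he hea =>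
    calc e ^ 2 ≤ ‖e‖ • e := sq_le_norm_smul_self he
      _ ≤ ‖(2 : ℝ) • a‖ • e :=
        smul_le_smul_of_nonneg_right (norm_le_norm_of_nonneg_of_le he hea) he
      _ = (2 * ‖a‖) • e := by rw [norm_smul, Real.norm_two]
  have hplus := hsq (a + d) (neg_le_iff_add_nonneg'.1 h₁) (by rw [two_smul]; gcongr)
  have hminus := hsq (a - d) (sub_nonneg.2 h₂) (by
    rw [two_smul, sub_eq_add_neg]
    gcongr
    exact neg_le.1 h₁)
  have hparallelogram : (a + d) ^ 2 + (a - d) ^ 2 = (2 : ℝ) • (a ^ 2 + d ^ 2) := by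
    rw [two_smul]; noncomm_ring
  have ha2 : 0 ≤ a ^ 2 := (IsSelfAdjoint.of_nonneg ha).sq_nonneg
  refine (smul_le_smul_iff_of_pos_left (two_pos (α := ℝ))).1 ?_
  calc (2 : ℝ) • d ^ 2 ≤ (2 : ℝ) • (a ^ 2 + d ^ 2) := by gcongr; exact le_add_of_nonneg_left ha2
    _ = (a + d) ^ 2 + (a - d) ^ 2 := hparallelogram.symm
    _ ≤ (2 * ‖a‖) • (a + d) + (2 * ‖a‖) • (a - d) := add_le_add hplus hminus
    _ = (2 : ℝ) • ((2 * ‖a‖) • a) := by module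

lemma eq_zero_of_neg_le_of_le_of_singular {a b d : A}
    (hs : ∀ c, 0 ≤ c → c ≤ a → c ≤ b → c = 0)
    (ha₁ : -a ≤ d) (ha₂ : d ≤ a) (hb₁ : -b ≤ d) (hb₂ : d ≤ b) : d = 0 := by
  set k : ℝ := 2 * ‖a‖ + 2 * ‖b‖ + 1
  have hk : 0 < k := by positivity
  have hd : IsSelfAdjoint d := by
    simpa using (IsSelfAdjoint.of_nonneg (neg_le_iff_add_nonneg'.1 ha₁)).sub
      (IsSelfAdjoint.of_nonneg (nonneg_of_neg_le_of_le ha₁ ha₂))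
  have hbound : ∀ p, -p ≤ d → d ≤ p → 2 * ‖p‖ ≤ k → k⁻¹ • d ^ 2 ≤ p := fun p h₁ h₂ hpk => by
    rw [inv_smul_le_iff_of_pos hk]
    exact (sq_le_two_norm_smul_of_neg_le_of_le h₁ h₂).trans
      (smul_le_smul_of_nonneg_right hpk (nonneg_of_neg_le_of_le h₁ h₂))
  have hzero := hs (k⁻¹ • d ^ 2) (smul_nonneg (inv_nonneg.2 hk.le) hd.sq_nonneg)
    (hbound a ha₁ ha₂ (by linarith [norm_nonneg b]))
    (hbound b hb₁ hb₂ (by linarith [norm_nonneg a]))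
  rw [smul_eq_zero, or_iff_right (inv_ne_zero hk.ne'), sq] at hzero
  exact (CStarRing.star_mul_self_eq_zero_iff d).1 (by rwa [hd.star_eq])

theorem mem_extremePoints_Icc_zero_iff {a b : A} (ha : 0 ≤ a) (hab : a ≤ b) :
    a ∈ (Set.Icc 0 b).extremePoints ℝ ↔ ∀ c, 0 ≤ c → c ≤ a → c ≤ b - a → c = 0 := by
  rw [(convex_Icc 0 b).mem_extremePoints_iff_forall_add_sub ⟨ha, hab⟩]
  refine ⟨fun h c hc hca hcb => h c ⟨add_nonneg ha hc, ?_⟩ ⟨sub_nonneg.2 hca, ?_⟩,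
    fun hs d ⟨hplus₀, hplus⟩ ⟨hminus₀, hminus⟩ => eq_zero_of_neg_le_of_le_of_singular hs
      (neg_le_iff_add_nonneg'.2 hplus₀) (sub_nonneg.1 hminus₀) ?_ ?_⟩
  · exact (le_sub_iff_add_le').1 hcb
  · exact (sub_le_self a hc).trans hab
  · rw [neg_sub]
    exact sub_le_comm.1 hminus
  · exact le_sub_iff_add_le'.2 hplus

end CStarAlgebra

section Operators

variable {H : Type*} [NormedAddCommGroup H] [InnerProductSpace ℂ H]

lemma isPosOp_iff_isPositive (T : H →L[ℂ] H) : IsPosOp T ↔ T.IsPositive := by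
  rw [ContinuousLinearMap.isPositive_iff_complex]
  refine forall_congr' fun x => ?_
  rw [Complex.nonneg_iff, Complex.ext_iff]
  simp [and_comm]

lemma isPosOp_iff_nonneg (T : H →L[ℂ] H) : IsPosOp T ↔ 0 ≤ T :=
  (isPosOp_iff_isPositive T).trans (ContinuousLinearMap.nonneg_iff_isPositive T).symm

lemma opLe_iff_le (S T : H →L[ℂ] H) : OpLe S T ↔ S ≤ T :=
  isPosOp_iff_isPositive (T - S)

lemma singOp_iff (S T : H →L[ℂ] H) : SingOp S T ↔ ∀ C, 0 ≤ C → C ≤ S → C ≤ T → C = 0 := by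
  simp only [SingOp, isPosOp_iff_nonneg, opLe_iff_le]

end Operators

theorem extreme_point_iff_singular_general
    {H : Type*} [NormedAddCommGroup H] [InnerProductSpace ℂ H] [CompleteSpace H]
    (A B : H →L[ℂ] H) (hA : IsPosOp A) (hAB : OpLe A B) :
    A ∈ Set.extremePoints ℝ {C : H →L[ℂ] H | IsPosOp C ∧ OpLe C B} ↔
      SingOp A (B - A) := by
  have hIcc : {C : H →L[ℂ] H | IsPosOp C ∧ OpLe C B} = Set.Icc 0 B := by
    ext C
    simp only [Set.mem_ofPred_eq, Set.mem_Icc, isPosOp_iff_nonneg, opLe_iff_le]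
  rw [hIcc, singOp_iff]
  exact CStarAlgebra.mem_extremePoints_Icc_zero_iff ((isPosOp_iff_nonneg A).1 hA)
    ((opLe_iff_le A B).1 hAB)

theorem extreme_point_iff_singular
    {H : Type*} [NormedAddCommGroup H] [InnerProductSpace ℂ H] [CompleteSpace H]
    (A B : H →L[ℂ] H) (hA : IsPosOp A) (hB : IsPosOp B) (hAB : OpLe A B) :
    A ∈ Set.extremePoints ℝ {C : H →L[ℂ] H | IsPosOp C ∧ OpLe C B} ↔
      SingOp A (B - A) :=
  extreme_point_iff_singular_general A B hA hAB
end

section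
/- Let t, w, u be nonnegative forms on a complex vector space X such that w is a t-quasi-unit (w[x] = sup_{n∈ℕ} inf_{y∈X} (t[x−y] + n·w[y]) for all x) and u ≤ t. Let p be a nonnegative form with p[x] = sup_{n∈ℕ} inf_{y∈X} (u[x−y] + n·w[y]) for all x ∈ X (i.e. p = D_w u). Then p is the greatest lower bound of w and u in the set of all nonnegative forms on X: p ≤ w, p ≤ u, and every nonnegative form s with s ≤ w and s ≤ u satisfies s ≤ p. -/
open scoped ComplexOrder

/-- A sesquilinear form (linear in the first, conjugate-linear in the second variable)
`t : X →ₗ[ℂ] X →ₗ⋆[ℂ] ℂ` is nonnegative if `t(x,x) ≥ 0` for all `x`. -/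
def IsNNForm {X : Type*} [AddCommGroup X] [Module ℂ X]
    (t : X →ₗ[ℂ] X →ₗ⋆[ℂ] ℂ) : Prop :=
  ∀ x : X, 0 ≤ t x x

/-- The quadratic form of a form: `t[x] = t(x,x)`, viewed as a real number. -/
def FQ {X : Type*} [AddCommGroup X] [Module ℂ X]
    (t : X →ₗ[ℂ] X →ₗ⋆[ℂ] ℂ) (x : X) : ℝ :=
  (t x x).re

/-- The order on forms: `t ≤ w` iff `t[x] ≤ w[x]` for all `x`. -/
def FLe {X : Type*} [AddCommGroup X] [Module ℂ X]
    (t w : X →ₗ[ℂ] X →ₗ⋆[ℂ] ℂ) : Prop :=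
  ∀ x : X, FQ t x ≤ FQ w x

/-- `t` and `w` are singular: the only nonnegative form below both is the zero form. -/
def SingForm {X : Type*} [AddCommGroup X] [Module ℂ X]
    (t w : X →ₗ[ℂ] X →ₗ⋆[ℂ] ℂ) : Prop :=
  ∀ s : X →ₗ[ℂ] X →ₗ⋆[ℂ] ℂ, IsNNForm s → FLe s t → FLe s w → s = 0

/-!
`D_w u` is a supremum of infimal convolutions of `u` with `n • w`, so it is monotone in `u`
and bounded by `u`; with `u ≤ t` and `D_w t = w` this gives `D_w u ≤ w` and `D_w u ≤ u`.
For maximality, a nonnegative form `s` satisfies `n/(n+1) · s[x] ≤ s[x - y] + n · s[y]`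
(expand `s[(x - y) - n • y] ≥ 0`), so every `s ≤ u, w` lies below each infimum up to the
factor `n/(n+1) → 1`.
-/

open Set Filter Topology

lemma nat_mul_nonneg {X : Type*} {b : X → ℝ} (hb : 0 ≤ b) (n : ℕ) :
    0 ≤ fun y => (n : ℝ) * b y :=
  fun y => mul_nonneg n.cast_nonneg (hb y)

section InfConv

variable {X : Type*} [AddGroup X]

noncomputable def infConv (a b : X → ℝ) (x : X) : ℝ :=
  ⨅ y, a (x - y) + b y

/-- The quadratic form of `D_b a`. -/
noncomputable def infConvSup (a b : X → ℝ) (x : X) : ℝ :=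
  ⨆ n : ℕ, infConv a (fun y => n * b y) x

variable {a a' b : X → ℝ}

lemma bddBelow_range_add (ha : 0 ≤ a) (hb : 0 ≤ b) (x : X) :
    BddBelow (range fun y => a (x - y) + b y) :=
  ⟨0, by rintro _ ⟨y, rfl⟩; exact add_nonneg (ha _) (hb _)⟩

lemma infConv_le_left (ha : 0 ≤ a) (hb : 0 ≤ b) (hb0 : b 0 = 0) (x : X) :
    infConv a b x ≤ a x := by
  simpa [infConv, hb0] using ciInf_le (bddBelow_range_add ha hb x) 0

lemma infConv_mono_left (ha : 0 ≤ a) (hb : 0 ≤ b) (haa' : a ≤ a') (x : X) :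
    infConv a b x ≤ infConv a' b x :=
  ciInf_mono (bddBelow_range_add ha hb x) fun _ => add_le_add (haa' _) le_rfl

lemma bddAbove_range_infConv (ha : 0 ≤ a) (hb : 0 ≤ b) (hb0 : b 0 = 0) (x : X) :
    BddAbove (range fun n : ℕ => infConv a (fun y => n * b y) x) :=
  ⟨a x, by
    rintro _ ⟨n, rfl⟩
    exact infConv_le_left ha (nat_mul_nonneg hb n) (by simp [hb0]) x⟩

lemma infConvSup_le_left (ha : 0 ≤ a) (hb : 0 ≤ b) (hb0 : b 0 = 0) (x : X) :
    infConvSup a b x ≤ a x :=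
  ciSup_le fun n => infConv_le_left ha (nat_mul_nonneg hb n) (by simp [hb0]) x

lemma infConvSup_mono_left (ha : 0 ≤ a) (hb : 0 ≤ b) (hb0 : b 0 = 0) (haa' : a ≤ a')
    (x : X) : infConvSup a b x ≤ infConvSup a' b x :=
  ciSup_mono (bddAbove_range_infConv (ha.trans haa') hb hb0 x) fun n =>
    infConv_mono_left ha (nat_mul_nonneg hb n) haa' x

lemma le_infConvSup (ha : 0 ≤ a) (hb : 0 ≤ b) (hb0 : b 0 = 0) {c : ℝ} {x : X}
    (h : ∀ (n : ℕ) y, n / (n + 1) * c ≤ a (x - y) + n * b y) : c ≤ infConvSup a b x := by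
  have hlim : Tendsto (fun n : ℕ => (n : ℝ) / (n + 1) * c) atTop (𝓝 c) := by
    simpa using (tendsto_natCast_div_add_atTop (1 : ℝ)).mul_const c
  exact le_of_tendsto hlim (Eventually.of_forall fun n =>
    (le_ciInf (h n)).trans (le_ciSup (bddAbove_range_infConv ha hb hb0 x) n))

end InfConv

section Forms

variable {X : Type*} [AddCommGroup X] [Module ℂ X] {s : X →ₗ[ℂ] X →ₗ⋆[ℂ] ℂ}

lemma FQ_nonneg (hs : IsNNForm s) : 0 ≤ FQ s :=
  fun x => (Complex.nonneg_iff.mp (hs x)).1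

lemma FQ_zero (s : X →ₗ[ℂ] X →ₗ⋆[ℂ] ℂ) : FQ s 0 = 0 := by
  simp [FQ]

lemma FQ_add (s : X →ₗ[ℂ] X →ₗ⋆[ℂ] ℂ) (v y : X) :
    FQ s (v + y) = FQ s v + ((s v y).re + (s y v).re) + FQ s y := by
  simp only [FQ, map_add, LinearMap.add_apply, Complex.add_re]
  ring

lemma FQ_sub_smul (s : X →ₗ[ℂ] X →ₗ⋆[ℂ] ℂ) (v y : X) (c : ℝ) :
    FQ s (v - (c : ℂ) • y) = FQ s v - c * ((s v y).re + (s y v).re) + c ^ 2 * FQ s y := by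
  simp only [FQ, map_sub, map_smul, map_smulₛₗ, LinearMap.sub_apply, LinearMap.smul_apply,
    Complex.conj_ofReal, smul_eq_mul, Complex.sub_re, Complex.re_ofReal_mul]
  ring

lemma mul_FQ_le (hs : IsNNForm s) (c : ℝ) (x y : X) :
    c * FQ s x ≤ (c + 1) * (FQ s (x - y) + c * FQ s y) := by
  have hx : FQ s x = FQ s (x - y) + ((s (x - y) y).re + (s y (x - y)).re) + FQ s y := by
    rw [← FQ_add, sub_add_cancel]
  have hsq : 0 ≤ FQ s (x - y - (c : ℂ) • y) := FQ_nonneg hs _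
  rw [FQ_sub_smul] at hsq
  rw [hx]
  linarith

lemma div_mul_FQ_le (hs : IsNNForm s) (n : ℕ) (x y : X) :
    n / (n + 1) * FQ s x ≤ FQ s (x - y) + n * FQ s y := by
  rw [div_mul_eq_mul_div, div_le_iff₀ (by positivity), mul_comm _ ((n : ℝ) + 1)]
  exact mul_FQ_le hs n x y

end Forms

theorem inf_with_quasi_unit_exists_general
    {X : Type*} [AddCommGroup X] [Module ℂ X]
    (t w u p : X →ₗ[ℂ] X →ₗ⋆[ℂ] ℂ)
    (hw : IsNNForm w) (hu : IsNNForm u)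
    (hwq : ∀ x : X, FQ w x = ⨆ n : ℕ, ⨅ y : X, (FQ t (x - y) + (n : ℝ) * FQ w y))
    (hut : FLe u t)
    (hpd : ∀ x : X, FQ p x = ⨆ n : ℕ, ⨅ y : X, (FQ u (x - y) + (n : ℝ) * FQ w y)) :
    FLe p w ∧ FLe p u ∧
      ∀ s : X →ₗ[ℂ] X →ₗ⋆[ℂ] ℂ, IsNNForm s → FLe s w → FLe s u → FLe s p := by
  have hp : FQ p = infConvSup (FQ u) (FQ w) := funext hpd
  refine ⟨fun x => ?_, fun x => ?_, fun s hs hsw hsu x => ?_⟩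
  · rw [hp, hwq x]
    exact infConvSup_mono_left (FQ_nonneg hu) (FQ_nonneg hw) (FQ_zero w) hut x
  · rw [hp]
    exact infConvSup_le_left (FQ_nonneg hu) (FQ_nonneg hw) (FQ_zero w) x
  · rw [hp]
    refine le_infConvSup (FQ_nonneg hu) (FQ_nonneg hw) (FQ_zero w) fun n y => ?_
    calc (n : ℝ) / (n + 1) * FQ s x ≤ FQ s (x - y) + n * FQ s y := div_mul_FQ_le hs n x y
      _ ≤ FQ u (x - y) + n * FQ w y := by gcongr; exacts [hsu _, hsw _]

theorem inf_with_quasi_unit_exists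
    {X : Type*} [AddCommGroup X] [Module ℂ X]
    (t w u p : X →ₗ[ℂ] X →ₗ⋆[ℂ] ℂ)
    (ht : IsNNForm t) (hw : IsNNForm w) (hu : IsNNForm u) (hp : IsNNForm p)
    (hwq : ∀ x : X, FQ w x = ⨆ n : ℕ, ⨅ y : X, (FQ t (x - y) + (n : ℝ) * FQ w y))
    (hut : FLe u t)
    (hpd : ∀ x : X, FQ p x = ⨆ n : ℕ, ⨅ y : X, (FQ u (x - y) + (n : ℝ) * FQ w y)) :
    FLe p w ∧ FLe p u ∧
      ∀ s : X →ₗ[ℂ] X →ₗ⋆[ℂ] ℂ, IsNNForm s → FLe s w → FLe s u → FLe s p :=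
  inf_with_quasi_unit_exists_general t w u p hw hu hwq hut hpd
end
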